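/- arXiv:1104.2166 — 4 statements merged into one kernel-verified Lean document; each statement's English description precedes it below -/
import Mathlib

section
/- Let ρ₀ : ℝ^d → [0,∞] be a measurable function that is locally integrable on ℝ^d \ {0}, and suppose there exist z₀ ∈ ℝ^d and ε > 0 such that ∫_{{|z−z₀| ≤ ε}} 1/ρ₀(z) dz < ∞ (with the convention 1/0 = +∞). Then there exist a closed subset F of the closed ball {z ∈ ℝ^d : |z−z₀| ≤ ε} and a constant δ > 0 such that inf_{x ∈ ℝ^d, |x| ≤ δ} ∫_F min(ρ₀(z), ρ₀(z−x)) dz > 0. -/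
/-!
Since `∫_B ρ₀⁻¹ < ∞` on the ball `B`, `ρ₀ > 0` a.e. on `B`, so some level set `{c ≤ ρ₀} ∩ B`
has positive measure and, by inner regularity, contains a closed set `F` of positive measure.
Translation is continuous in measure, so `F ∩ (F + x)` keeps measure at least some `r > 0`
for all small `x`; on that set both `ρ₀ z` and `ρ₀ (z - x)` are at least `c`, whence the
infimum is at least `c * r`.
-/

open MeasureTheory Filter Topology
open scoped ENNReal symmDiff

section
variable {G : Type*} [AddGroup G] [TopologicalSpace G] [IsTopologicalAddGroup G]
  [MeasurableSpace G] [BorelSpace G] {μ : Measure G} [μ.IsAddRightInvariant]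
  [μ.InnerRegularCompactLTTop] [IsLocallyFiniteMeasure μ] {s : Set G}

theorem tendsto_measure_preimage_sub_symmDiff (hs : MeasurableSet s) (hμs : μ s ≠ ∞) :
    Tendsto (fun x ↦ μ (((fun z ↦ z - x) ⁻¹' s) ∆ s)) (𝓝 0) (𝓝 0) := by
  let translate : C(G, C(G, G)) := (⟨fun p : G × G ↦ p.2 - p.1, by fun_prop⟩ : C(G × G, G)).curry
  convert tendsto_measure_symmDiff_preimage_nhds_zero (translate.continuous.tendsto 0)
    (.of_forall fun x ↦ measurePreserving_sub_right μ x) (measurePreserving_sub_right μ 0)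
    hs.nullMeasurableSet hμs using 4
  · rfl
  · change s = (fun z ↦ z - 0) ⁻¹' s
    simp

theorem eventually_lt_measure_inter_preimage_sub (hs : MeasurableSet s) (hμs : μ s ≠ ∞)
    {r : ℝ≥0∞} (hr : r < μ s) : ∀ᶠ x in 𝓝 0, r < μ (s ∩ (fun z ↦ z - x) ⁻¹' s) := by
  filter_upwards [(tendsto_measure_preimage_sub_symmDiff hs hμs).eventually
    (gt_mem_nhds (tsub_pos_of_lt hr))] with x hx
  have hsplit : μ s ≤ μ (s ∩ (fun z ↦ z - x) ⁻¹' s) + μ (((fun z ↦ z - x) ⁻¹' s) ∆ s) :=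
    (measure_le_inter_add_sdiff _ _ _).trans <| by
      gcongr
      rw [symmDiff_def]
      exact Set.subset_union_right
  exact (lt_tsub_comm.mp hx).trans_le (tsub_le_iff_right.mpr hsplit)
end

theorem exists_measure_setOf_inv_natCast_le_ne_zero {α : Type*} [MeasurableSpace α]
    {μ : Measure α} {f : α → ℝ≥0∞} (hμ : μ ≠ 0) (hf : ∀ᵐ z ∂μ, 0 < f z) :
    ∃ n : ℕ, μ {z | (n : ℝ≥0∞)⁻¹ ≤ f z} ≠ 0 := by
  by_contra! h
  apply hμ
  rw [← ae_eq_bot, ← eventually_false_iff_eq_bot]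
  have hsmall : ∀ᵐ z ∂μ, ∀ n : ℕ, ¬ (n : ℝ≥0∞)⁻¹ ≤ f z :=
    ae_all_iff.2 fun n ↦ measure_eq_zero_iff_ae_notMem.1 (h n)
  filter_upwards [hf, hsmall] with z hz hsmall
  obtain ⟨n, hn⟩ := ENNReal.exists_inv_nat_lt hz.ne'
  exact hsmall n hn.le

theorem mul_measure_inter_preimage_sub_le_setLIntegral_min {G : Type*} [AddGroup G]
    [MeasurableSpace G] [MeasurableSub G] {μ : Measure G} {f : G → ℝ≥0∞} {c : ℝ≥0∞} {s : Set G}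
    (hs : MeasurableSet s) (hfs : ∀ z ∈ s, c ≤ f z) (x : G) :
    c * μ (s ∩ (fun z ↦ z - x) ⁻¹' s) ≤ ∫⁻ z in s, min (f z) (f (z - x)) ∂μ :=
  calc c * μ (s ∩ (fun z ↦ z - x) ⁻¹' s) = ∫⁻ _ in s ∩ (fun z ↦ z - x) ⁻¹' s, c ∂μ :=
        (setLIntegral_const _ _).symm
    _ ≤ ∫⁻ z in s ∩ (fun z ↦ z - x) ⁻¹' s, min (f z) (f (z - x)) ∂μ :=
        setLIntegral_mono' (hs.inter (measurable_sub_const x hs)) fun z hz ↦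
          le_min (hfs z hz.1) (hfs _ hz.2)
    _ ≤ ∫⁻ z in s, min (f z) (f (z - x)) ∂μ := lintegral_mono_set Set.inter_subset_left

theorem stmt0_general {d : ℕ} (ρ₀ : EuclideanSpace ℝ (Fin d) → ℝ≥0∞)
    (hmeas : Measurable ρ₀)
    (z₀ : EuclideanSpace ℝ (Fin d)) (ε : ℝ) (hε : 0 < ε)
    (hinv : ∫⁻ z in Metric.closedBall z₀ ε, (ρ₀ z)⁻¹ < ∞) :
    ∃ F : Set (EuclideanSpace ℝ (Fin d)), IsClosed F ∧ F ⊆ Metric.closedBall z₀ ε ∧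
      ∃ δ > (0 : ℝ), 0 < ⨅ x : {x : EuclideanSpace ℝ (Fin d) // ‖x‖ ≤ δ},
        ∫⁻ z in F, min (ρ₀ z) (ρ₀ (z - x.1)) := by
  set B := Metric.closedBall z₀ ε
  have hpos : ∀ᵐ z ∂volume.restrict B, 0 < ρ₀ z := by
    filter_upwards [ae_lt_top hmeas.inv hinv.ne] with z hz
    exact ENNReal.inv_lt_top.1 hz
  have hB : volume.restrict B ≠ 0 := by
    simpa [Measure.restrict_eq_zero] using (Metric.measure_closedBall_pos volume z₀ hε).ne'
  obtain ⟨n, hn⟩ := exists_measure_setOf_inv_natCast_le_ne_zero hB hpos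
  set c := (n : ℝ≥0∞)⁻¹
  have hA : MeasurableSet {z | c ≤ ρ₀ z} := hmeas measurableSet_Ici
  rw [Measure.restrict_apply hA] at hn
  obtain ⟨F, hFA, hFclosed, hF⟩ := (hA.inter measurableSet_closedBall).exists_lt_isClosed_of_ne_top
    (measure_ne_top_of_subset Set.inter_subset_right measure_closedBall_lt_top.ne)
    (pos_iff_ne_zero.2 hn)
  have hFB : F ⊆ B := hFA.trans Set.inter_subset_right
  obtain ⟨r, hr, hrF⟩ := exists_between hF
  obtain ⟨δ, hδ, hoverlap⟩ := Metric.nhds_basis_closedBall.eventually_iff.1 <|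
    eventually_lt_measure_inter_preimage_sub hFclosed.measurableSet
      (measure_ne_top_of_subset hFB measure_closedBall_lt_top.ne) hrF
  refine ⟨F, hFclosed, hFB, δ, hδ, ?_⟩
  calc 0 < c * r := ENNReal.mul_pos (ENNReal.inv_ne_zero.2 (ENNReal.natCast_ne_top n)) hr.ne'
    _ ≤ _ := le_iInf fun x : {x : EuclideanSpace ℝ (Fin d) // ‖x‖ ≤ δ} ↦
        (mul_le_mul_right (hoverlap (by simpa using x.2)).le c).trans
          (mul_measure_inter_preimage_sub_le_setLIntegral_min hFclosed.measurableSet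
            (fun z hz ↦ (hFA hz).1) x.1)

/-- If `ρ₀ : ℝ^d → [0,∞]` is measurable, locally integrable on `ℝ^d \ {0}`,
and `∫_{|z - z₀| ≤ ε} 1/ρ₀(z) dz < ∞` for some `z₀` and `ε > 0`, then there are a closed set
`F ⊆ closedBall z₀ ε` and `δ > 0` with `inf_{|x| ≤ δ} ∫_F min(ρ₀(z), ρ₀(z - x)) dz > 0`. -/
theorem stmt0 {d : ℕ} (ρ₀ : EuclideanSpace ℝ (Fin d) → ℝ≥0∞)
    (hmeas : Measurable ρ₀)
    (hloc : ∀ K : Set (EuclideanSpace ℝ (Fin d)),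
      IsCompact K → (0 : EuclideanSpace ℝ (Fin d)) ∉ K → ∫⁻ z in K, ρ₀ z < ∞)
    (z₀ : EuclideanSpace ℝ (Fin d)) (ε : ℝ) (hε : 0 < ε)
    (hinv : ∫⁻ z in Metric.closedBall z₀ ε, (ρ₀ z)⁻¹ < ∞) :
    ∃ F : Set (EuclideanSpace ℝ (Fin d)), IsClosed F ∧ F ⊆ Metric.closedBall z₀ ε ∧
      ∃ δ > (0 : ℝ), 0 < ⨅ x : {x : EuclideanSpace ℝ (Fin d) // ‖x‖ ≤ δ},
        ∫⁻ z in F, min (ρ₀ z) (ρ₀ (z - x.1)) :=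
  stmt0_general ρ₀ hmeas z₀ ε hε hinv
end

section
/- Let (V_i)_{i≥1} be independent identically distributed ℤ-valued random variables with P(V_i = −1) = P(V_i = 1) = (1−r)/2 and P(V_i = 0) = r for some 0 ≤ r < 1, and set S_i = V_1 + ⋯ + V_i. Then for any positive integers a and k: 2·P(0 < S_k < a) ≤ P(max_{1 ≤ i ≤ k} S_i < a) ≤ 2·P(0 ≤ S_k ≤ a). -/
/-!
Reflection principle. Let `τ` be the first time the walk reaches level `a`. Since no step
exceeds `1`, `S_τ = a`, so flipping the signs of all steps after `τ` maps the paths that reach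
`a` but end below it bijectively onto the paths that end above `a`; by independence and the
symmetry of each step this preserves probabilities. Hence
`P(max S_i < a) = P(S_k < a) - P(S_k > a) = P(-a ≤ S_k < a)`, using the symmetry of `S_k`, and
both inequalities follow by cutting `[-a, a)` at `0` and using that symmetry once more.
-/

open MeasureTheory ProbabilityTheory Finset
open scoped ENNReal

theorem measure_preimage_eq_of_bijOn {Ω β : Type*} [MeasurableSpace Ω] [Countable β]
    {μ : Measure Ω} {X : Ω → β} (hX : ∀ y, MeasurableSet (X ⁻¹' {y})) {f : β → β} {s t : Set β}
    (hf : Set.BijOn f s t) (hμ : ∀ y ∈ s, μ (X ⁻¹' {f y}) = μ (X ⁻¹' {y})) :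
    μ (X ⁻¹' s) = μ (X ⁻¹' t) := by
  rw [← tsum_measure_preimage_singleton s.to_countable fun y _ => hX y,
    ← tsum_measure_preimage_singleton t.to_countable fun y _ => hX y, ← (hf.equiv f).tsum_eq]
  exact tsum_congr fun y => (hμ y y.2).symm

namespace RandomWalk

variable {k : ℕ}

def step (x : Fin k → ℤ) (i : ℕ) : ℤ := if h : i < k then x ⟨i, h⟩ else 0

def partialSum (x : Fin k → ℤ) (n : ℕ) : ℤ := ∑ i ∈ range n, step x i

def reflectFrom (t : ℕ) (x : Fin k → ℤ) : Fin k → ℤ := fun i => if (i : ℕ) < t then x i else -x i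

-- `sInf ∅ = 0`: only meaningful for paths that reach `a`.
noncomputable def hittingTime (a : ℤ) (x : Fin k → ℤ) : ℕ := sInf {n | a ≤ partialSum x n}

noncomputable def reflectAtHit (a : ℤ) (x : Fin k → ℤ) : Fin k → ℤ :=
  reflectFrom (hittingTime a x) x

def unitSteps (k : ℕ) : Set (Fin k → ℤ) := {x | ∀ i, |x i| ≤ 1}

variable {x : Fin k → ℤ} {a : ℤ} {t n : ℕ}

@[simp]
lemma partialSum_zero : partialSum x 0 = 0 := by simp [partialSum]

lemma step_reflectFrom (i : ℕ) :
    step (reflectFrom t x) i = if i < t then step x i else -step x i := by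
  unfold step reflectFrom
  split_ifs <;> simp_all

lemma partialSum_reflectFrom_add :
    partialSum (reflectFrom t x) n + partialSum x n = 2 * partialSum x (min n t) := by
  have hrange : (range n).filter (· < t) = range (min n t) := by
    ext i; simp only [mem_filter, mem_range]; omega
  simp only [partialSum, ← sum_add_distrib, step_reflectFrom, ← hrange, sum_filter, mul_sum]
  refine sum_congr rfl fun i _ => ?_
  split_ifs <;> ring

lemma partialSum_reflectFrom_of_le (h : n ≤ t) :
    partialSum (reflectFrom t x) n = partialSum x n := by
  have := partialSum_reflectFrom_add (x := x) (t := t) (n := n)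
  rw [min_eq_left h] at this
  linarith

@[simp]
lemma reflectFrom_reflectFrom : reflectFrom t (reflectFrom t x) = x := by
  funext i; unfold reflectFrom; split_ifs <;> simp

lemma partialSum_reflectFrom_zero : partialSum (reflectFrom 0 x) n = -partialSum x n := by
  have := partialSum_reflectFrom_add (x := x) (t := 0) (n := n)
  simp only [_root_.min_zero, partialSum_zero, mul_zero] at this
  linarith

lemma reflectFrom_mem_unitSteps (hx : x ∈ unitSteps k) : reflectFrom t x ∈ unitSteps k := by
  intro i; unfold reflectFrom; split_ifs <;> simp [hx i]

lemma partialSum_succ : partialSum x (n + 1) = partialSum x n + step x n :=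
  sum_range_succ _ _

lemma step_le_one (hx : x ∈ unitSteps k) (i : ℕ) : step x i ≤ 1 := by
  unfold step
  split_ifs with h
  · exact (abs_le.1 (hx ⟨i, h⟩)).2
  · exact zero_le_one

section hittingTime

variable (h : a ≤ partialSum x n)
include h

lemma le_partialSum_hittingTime : a ≤ partialSum x (hittingTime a x) :=
  Nat.sInf_mem (s := {n | a ≤ partialSum x n}) ⟨n, h⟩

lemma hittingTime_le : hittingTime a x ≤ n := Nat.sInf_le h

end hittingTime

lemma partialSum_lt_of_lt_hittingTime {m : ℕ} (hm : m < hittingTime a x) : partialSum x m < a :=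
  not_le.1 (Nat.notMem_of_lt_sInf hm)

lemma one_le_hittingTime (ha : 0 < a) (h : a ≤ partialSum x n) : 1 ≤ hittingTime a x := by
  by_contra! h0
  have := le_partialSum_hittingTime h
  rw [Nat.lt_one_iff.1 h0, partialSum_zero] at this
  omega

lemma partialSum_hittingTime (ha : 0 < a) (hx : x ∈ unitSteps k) (h : a ≤ partialSum x n) :
    partialSum x (hittingTime a x) = a := by
  obtain ⟨m, hm⟩ : ∃ m, hittingTime a x = m + 1 :=
    Nat.exists_eq_add_of_le' (one_le_hittingTime ha h)
  have hbefore := partialSum_lt_of_lt_hittingTime (x := x) (a := a) (m := m) (by omega)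
  have hat := le_partialSum_hittingTime h
  rw [hm, partialSum_succ] at hat ⊢
  linarith [step_le_one hx m]

lemma hittingTime_reflectAtHit (h : a ≤ partialSum x n) :
    hittingTime a (reflectAtHit a x) = hittingTime a x := by
  have hsame {m : ℕ} (hm : m ≤ hittingTime a x) :
      partialSum (reflectAtHit a x) m = partialSum x m := partialSum_reflectFrom_of_le hm
  have hhit : a ≤ partialSum (reflectAtHit a x) (hittingTime a x) := by
    rw [hsame le_rfl]; exact le_partialSum_hittingTime h
  refine (hittingTime_le hhit).antisymm (not_lt.1 fun hlt => ?_)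
  have := le_partialSum_hittingTime hhit
  rw [hsame hlt.le] at this
  exact (partialSum_lt_of_lt_hittingTime hlt).not_ge this

lemma reflectAtHit_reflectAtHit (h : a ≤ partialSum x n) :
    reflectAtHit a (reflectAtHit a x) = x := by
  rw [reflectAtHit, hittingTime_reflectAtHit h, reflectAtHit, reflectFrom_reflectFrom]

lemma partialSum_reflectAtHit (ha : 0 < a) (hx : x ∈ unitSteps k) (h : a ≤ partialSum x n)
    (hn : n ≤ k) : partialSum (reflectAtHit a x) k = 2 * a - partialSum x k := by
  have := partialSum_reflectFrom_add (x := x) (t := hittingTime a x) (n := k)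
  rw [min_eq_right ((hittingTime_le h).trans hn), partialSum_hittingTime ha hx h] at this
  rw [reflectAtHit]
  linarith

lemma bijOn_reflectAtHit (ha : 0 < a) :
    Set.BijOn (reflectAtHit a)
      (unitSteps k ∩ {x | (∃ i ∈ Icc 1 k, a ≤ partialSum x i) ∧ partialSum x k < a})
      (unitSteps k ∩ {x | a < partialSum x k}) := by
  refine Set.InvOn.bijOn (f' := reflectAtHit a) ⟨?_, ?_⟩ ?_ ?_
  · rintro x ⟨-, ⟨i, -, hi⟩, -⟩
    exact reflectAtHit_reflectAtHit hi
  · rintro x ⟨-, hk⟩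
    exact reflectAtHit_reflectAtHit hk.le
  · rintro x ⟨hx, ⟨i, hi, hai⟩, hk⟩
    refine ⟨reflectFrom_mem_unitSteps hx, ?_⟩
    show a < partialSum (reflectAtHit a x) k
    linarith [partialSum_reflectAtHit ha hx hai (mem_Icc.1 hi).2]
  · rintro x ⟨hx, hk : a < partialSum x k⟩
    have hhit : a ≤ partialSum (reflectAtHit a x) (hittingTime a x) := by
      rw [reflectAtHit, partialSum_reflectFrom_of_le le_rfl]
      exact le_partialSum_hittingTime hk.le
    refine ⟨reflectFrom_mem_unitSteps hx, ⟨hittingTime a x, ?_, hhit⟩, ?_⟩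
    · exact mem_Icc.2 ⟨one_le_hittingTime ha hk.le, hittingTime_le hk.le⟩
    · linarith [partialSum_reflectAtHit ha hx hk.le le_rfl]

section Steps

variable {Ω : Type*} [MeasurableSpace Ω] {P : Measure Ω} {Y : Ω → ℤ}

lemma ae_abs_le_one_of_measure_eq [IsProbabilityMeasure P] (hY : Measurable Y) {r : ℝ}
    (hp1 : P {ω | Y ω = 1} = ENNReal.ofReal ((1 - r) / 2))
    (hm1 : P {ω | Y ω = -1} = ENNReal.ofReal ((1 - r) / 2))
    (h0 : P {ω | Y ω = 0} = ENNReal.ofReal r) :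
    ∀ᵐ ω ∂P, |Y ω| ≤ 1 := by
  -- `ENNReal.ofReal` is superadditive, so the three masses add up to at least `1` for every `r`.
  have hmass : P (Y ⁻¹' ↑({-1, 0, 1} : Finset ℤ)) = 1 := by
    refine le_antisymm prob_le_one ?_
    rw [← sum_measure_preimage_singleton _ fun z _ => hY (measurableSet_singleton z),
      sum_insert (by decide), sum_insert (by decide), sum_singleton]
    change 1 ≤ P {ω | Y ω = -1} + (P {ω | Y ω = 0} + P {ω | Y ω = 1})
    rw [hp1, hm1, h0]
    calc (1 : ℝ≥0∞) = ENNReal.ofReal ((1 - r) / 2 + (r + (1 - r) / 2)) := by ring_nf; simp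
      _ ≤ _ := ENNReal.ofReal_add_le.trans (by gcongr; exact ENNReal.ofReal_add_le)
  have hae : ∀ᵐ ω ∂P, Y ω ∈ ({-1, 0, 1} : Finset ℤ) :=
    (ae_iff_measure_eq (hY .of_discrete).nullMeasurableSet).2 (hmass.trans measure_univ.symm)
  filter_upwards [hae] with ω hω
  simp only [mem_insert, mem_singleton] at hω
  rcases hω with h | h | h <;> simp [h]

lemma measure_preimage_neg_singleton (hbound : ∀ᵐ ω ∂P, |Y ω| ≤ 1)
    (h : P {ω | Y ω = 1} = P {ω | Y ω = -1}) (z : ℤ) : P (Y ⁻¹' {-z}) = P (Y ⁻¹' {z}) := by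
  have hnull {z : ℤ} (hz : 1 < |z|) : P (Y ⁻¹' {z}) = 0 :=
    measure_mono_null (fun ω (hω : Y ω = z) => by simpa [hω] using hz) (ae_iff.1 hbound)
  by_cases hz : |z| ≤ 1
  · obtain rfl | rfl | rfl : z = -1 ∨ z = 0 ∨ z = 1 := by rw [abs_le] at hz; omega
    exacts [h, rfl, h.symm]
  · rw [hnull (by rwa [abs_neg, ← not_le]), hnull (not_le.1 hz)]

end Steps

section SymmetricLaw

variable {Ω : Type*} [MeasurableSpace Ω] {P : Measure Ω} {Z : Ω → ℤ}
    (hZ : ∀ p : ℤ → Prop, P {ω | p (Z ω)} = P {ω | p (-Z ω)}) (a : ℤ)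
include hZ

lemma two_mul_measure_pos_lt_le (hZm : Measurable Z) :
    2 * P {ω | 0 < Z ω ∧ Z ω < a} ≤ P {ω | -a ≤ Z ω ∧ Z ω < a} := by
  have hneg : P {ω | 0 < Z ω ∧ Z ω < a} = P {ω | -a < Z ω ∧ Z ω < 0} := by
    rw [hZ (fun z => 0 < z ∧ z < a)]
    congr 1 with ω
    simp only [Set.mem_ofPred_eq]
    omega
  calc 2 * P {ω | 0 < Z ω ∧ Z ω < a}
      = P ({ω | 0 < Z ω ∧ Z ω < a} ∪ {ω | -a < Z ω ∧ Z ω < 0}) := by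
        have hmeas : MeasurableSet {ω | -a < Z ω ∧ Z ω < 0} :=
          hZm (t := {z | -a < z ∧ z < 0}) .of_discrete
        rw [measure_union _ hmeas, two_mul, ← hneg]
        exact Set.disjoint_left.2 fun ω h h' => by
          simp only [Set.mem_ofPred_eq] at h h'; omega
    _ ≤ P {ω | -a ≤ Z ω ∧ Z ω < a} := measure_mono fun ω h => by
        simp only [Set.mem_union, Set.mem_ofPred_eq] at h ⊢; omega

lemma measure_Ico_le_two_mul : P {ω | -a ≤ Z ω ∧ Z ω < a} ≤ 2 * P {ω | 0 ≤ Z ω ∧ Z ω ≤ a} := by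
  have hneg : P {ω | 0 ≤ Z ω ∧ Z ω ≤ a} = P {ω | -a ≤ Z ω ∧ Z ω ≤ 0} := by
    rw [hZ (fun z => 0 ≤ z ∧ z ≤ a)]
    congr 1 with ω
    simp only [Set.mem_ofPred_eq]
    omega
  calc P {ω | -a ≤ Z ω ∧ Z ω < a}
      ≤ P ({ω | 0 ≤ Z ω ∧ Z ω ≤ a} ∪ {ω | -a ≤ Z ω ∧ Z ω ≤ 0}) := measure_mono fun ω h => by
        simp only [Set.mem_union, Set.mem_ofPred_eq] at h ⊢; omega
    _ ≤ 2 * P {ω | 0 ≤ Z ω ∧ Z ω ≤ a} := by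
        rw [two_mul]; nth_rw 2 [hneg]; exact measure_union_le _ _

end SymmetricLaw

section Walk

variable {Ω : Type*} {V : ℕ → Ω → ℤ} {S : ℕ → Ω → ℤ} {k : ℕ}

def path (V : ℕ → Ω → ℤ) (k : ℕ) (ω : Ω) : Fin k → ℤ := fun i => V i ω

lemma walk_eq_partialSum_path (hS : ∀ n ω, S n ω = ∑ i ∈ range n, V i ω) {n : ℕ} (hn : n ≤ k)
    (ω : Ω) : S n ω = partialSum (path V k ω) n := by
  rw [hS, partialSum]
  refine sum_congr rfl fun i hi => ?_
  rw [step, dif_pos ((mem_range.1 hi).trans_le hn)]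
  rfl

lemma setOf_walk_eq_preimage (hS : ∀ n ω, S n ω = ∑ i ∈ range n, V i ω) (p : ℤ → Prop) :
    {ω | p (S k ω)} = path V k ⁻¹' {x | p (partialSum x k)} := by
  ext ω
  simp [walk_eq_partialSum_path hS le_rfl]

variable [MeasurableSpace Ω] {P : Measure Ω}

lemma measurable_path (hV : ∀ i, Measurable (V i)) : Measurable (path V k) :=
  measurable_pi_lambda _ fun i => hV i

lemma measure_path_preimage_singleton (hindep : iIndepFun V P) (x : Fin k → ℤ) :
    P (path V k ⁻¹' {x}) = ∏ i : Fin k, P (V i ⁻¹' {x i}) := by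
  have hfibre : path V k ⁻¹' {x} = ⋂ i ∈ (univ : Finset (Fin k)), V i ⁻¹' {x i} := by
    ext ω; simp [path, funext_iff]
  rw [hfibre, (hindep.precomp Fin.val_injective).measure_inter_preimage_eq_mul univ
    fun _ _ => measurableSet_singleton _]

lemma measure_path_preimage_reflectFrom (hindep : iIndepFun V P)
    (hsymm : ∀ i z, P (V i ⁻¹' {-z}) = P (V i ⁻¹' {z})) (t : ℕ) (x : Fin k → ℤ) :
    P (path V k ⁻¹' {reflectFrom t x}) = P (path V k ⁻¹' {x}) := by
  simp only [measure_path_preimage_singleton hindep]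
  refine prod_congr rfl fun i _ => ?_
  unfold reflectFrom
  split_ifs
  exacts [rfl, hsymm _ _]

lemma measure_path_preimage_inter_unitSteps (hbound : ∀ i, ∀ᵐ ω ∂P, |V i ω| ≤ 1)
    (s : Set (Fin k → ℤ)) : P (path V k ⁻¹' (unitSteps k ∩ s)) = P (path V k ⁻¹' s) := by
  rw [Set.preimage_inter, Set.inter_comm]
  exact measure_inter_conull (ae_all_iff.2 fun i => hbound i)

lemma measurable_walk (hS : ∀ n ω, S n ω = ∑ i ∈ range n, V i ω) (hV : ∀ i, Measurable (V i))
    (n : ℕ) : Measurable (S n) := by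
  rw [show S n = fun ω => ∑ i ∈ range n, V i ω from funext (hS n)]
  exact Finset.measurable_sum _ fun i _ => hV i

variable (hS : ∀ n ω, S n ω = ∑ i ∈ range n, V i ω) (hV : ∀ i, Measurable (V i))
  (hindep : iIndepFun V P) (hsymm : ∀ i z, P (V i ⁻¹' {-z}) = P (V i ⁻¹' {z}))
include hS hV hindep hsymm

lemma measure_walk_neg (p : ℤ → Prop) : P {ω | p (S k ω)} = P {ω | p (-S k ω)} := by
  rw [setOf_walk_eq_preimage hS, setOf_walk_eq_preimage hS (fun z => p (-z))]
  refine measure_preimage_eq_of_bijOn (fun _ => measurable_path hV .of_discrete)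
    (f := reflectFrom 0) ?_ fun x _ => measure_path_preimage_reflectFrom hindep hsymm 0 x
  refine Set.InvOn.bijOn (f' := reflectFrom 0)
    ⟨fun _ _ => reflectFrom_reflectFrom, fun _ _ => reflectFrom_reflectFrom⟩ ?_ ?_
  · intro x (hx : p (partialSum x k))
    simpa [partialSum_reflectFrom_zero] using hx
  · intro x (hx : p (-partialSum x k))
    simpa [partialSum_reflectFrom_zero] using hx

lemma measure_hit_lt_eq (hbound : ∀ i, ∀ᵐ ω ∂P, |V i ω| ≤ 1) {a : ℤ} (ha : 0 < a) :
    P {ω | (∃ i ∈ Icc 1 k, a ≤ S i ω) ∧ S k ω < a} = P {ω | a < S k ω} := by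
  have hhit : {ω | (∃ i ∈ Icc 1 k, a ≤ S i ω) ∧ S k ω < a}
      = path V k ⁻¹' {x | (∃ i ∈ Icc 1 k, a ≤ partialSum x i) ∧ partialSum x k < a} := by
    ext ω
    refine and_congr (exists_congr fun i => and_congr_right fun hi => ?_) ?_
    · rw [walk_eq_partialSum_path hS (mem_Icc.1 hi).2]
    · rw [walk_eq_partialSum_path hS le_rfl]
  rw [hhit, setOf_walk_eq_preimage hS (a < ·), ← measure_path_preimage_inter_unitSteps hbound,
    ← measure_path_preimage_inter_unitSteps hbound {x | a < partialSum x k}]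
  exact measure_preimage_eq_of_bijOn (fun _ => measurable_path hV .of_discrete)
    (bijOn_reflectAtHit ha) fun x _ => measure_path_preimage_reflectFrom hindep hsymm _ x

lemma measure_forall_lt_eq [IsFiniteMeasure P] (hbound : ∀ i, ∀ᵐ ω ∂P, |V i ω| ≤ 1) {a : ℤ}
    (ha : 0 < a) :
    P {ω | ∀ i ∈ Icc 1 k, S i ω < a} = P {ω | -a ≤ S k ω ∧ S k ω < a} := by
  have hSk := measurable_walk hS hV k
  have hmax_meas : MeasurableSet {ω | ∀ i ∈ Icc 1 k, S i ω < a} := by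
    simp only [Set.ofPred_forall]
    exact .iInter fun i => .iInter fun _ =>
      measurableSet_lt (measurable_walk hS hV i) measurable_const
  have hmax : P {ω | S k ω < a}
      = P {ω | ∀ i ∈ Icc 1 k, S i ω < a} + P {ω | (∃ i ∈ Icc 1 k, a ≤ S i ω) ∧ S k ω < a} := by
    rw [← measure_inter_add_sdiff _ hmax_meas]
    congr 2
    · refine Set.inter_eq_right.2 fun ω (hω : ∀ i ∈ Icc 1 k, S i ω < a) => ?_
      rcases k.eq_zero_or_pos with rfl | hk
      · simpa [hS] using ha
      · exact hω k (mem_Icc.2 ⟨hk, le_rfl⟩)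
    · ext ω
      simp only [Set.mem_sdiff, Set.mem_ofPred_eq, not_forall, not_lt, exists_prop]
      tauto
  have hend : P {ω | S k ω < a} = P {ω | S k ω < -a} + P {ω | -a ≤ S k ω ∧ S k ω < a} := by
    have hlow : MeasurableSet {ω | S k ω < -a} := measurableSet_lt hSk measurable_const
    rw [← measure_inter_add_sdiff _ hlow]
    congr 2 <;> ext ω <;> simp only [Set.mem_inter_iff, Set.mem_sdiff, Set.mem_ofPred_eq] <;> omega
  have hhit : P {ω | (∃ i ∈ Icc 1 k, a ≤ S i ω) ∧ S k ω < a} = P {ω | S k ω < -a} := by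
    rw [measure_hit_lt_eq hS hV hindep hsymm hbound ha, measure_walk_neg hS hV hindep hsymm (a < ·)]
    congr 1
    ext ω
    simp only [Set.mem_ofPred_eq]
    omega
  rw [hmax, hhit, add_comm] at hend
  exact (ENNReal.add_right_inj (measure_ne_top P _)).1 hend

end Walk

end RandomWalk

open RandomWalk

theorem stmt5_general {Ω : Type*} [MeasurableSpace Ω] (P : Measure Ω) [IsProbabilityMeasure P]
    (r : ℝ)
    (V : ℕ → Ω → ℤ) (hVmeas : ∀ i, Measurable (V i))
    (hindep : iIndepFun V P)
    (hp1 : ∀ i, P {ω | V i ω = 1} = ENNReal.ofReal ((1 - r) / 2))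
    (hm1 : ∀ i, P {ω | V i ω = -1} = ENNReal.ofReal ((1 - r) / 2))
    (h0 : ∀ i, P {ω | V i ω = 0} = ENNReal.ofReal r)
    (S : ℕ → Ω → ℤ) (hS : ∀ k ω, S k ω = ∑ i ∈ Finset.range k, V i ω)
    (a k : ℕ) (ha : 0 < a) :
    2 * P {ω | 0 < S k ω ∧ S k ω < (a : ℤ)} ≤ P {ω | ∀ i ∈ Finset.Icc 1 k, S i ω < (a : ℤ)} ∧
      P {ω | ∀ i ∈ Finset.Icc 1 k, S i ω < (a : ℤ)} ≤
        2 * P {ω | 0 ≤ S k ω ∧ S k ω ≤ (a : ℤ)} := by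
  have hbound i : ∀ᵐ ω ∂P, |V i ω| ≤ 1 :=
    ae_abs_le_one_of_measure_eq (hVmeas i) (hp1 i) (hm1 i) (h0 i)
  have hsymm i : ∀ z, P (V i ⁻¹' {-z}) = P (V i ⁻¹' {z}) :=
    measure_preimage_neg_singleton (hbound i) ((hp1 i).trans (hm1 i).symm)
  have hneg := measure_walk_neg (k := k) hS hVmeas hindep hsymm
  rw [measure_forall_lt_eq hS hVmeas hindep hsymm hbound (Int.natCast_pos.2 ha)]
  exact ⟨two_mul_measure_pos_lt_le hneg _ (measurable_walk hS hVmeas k),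
    measure_Ico_le_two_mul hneg _⟩

/-- For the random walk `S_i = V_1 + ⋯ + V_i` with iid steps taking values
`-1, 1` with probability `(1-r)/2` each and `0` with probability `r` (`0 ≤ r < 1`), for all
positive integers `a, k`: `2·P(0 < S_k < a) ≤ P(max_{1 ≤ i ≤ k} S_i < a) ≤ 2·P(0 ≤ S_k ≤ a)`. -/
theorem stmt5 {Ω : Type*} [MeasurableSpace Ω] (P : Measure Ω) [IsProbabilityMeasure P]
    (r : ℝ) (hr0 : 0 ≤ r) (hr1 : r < 1)
    (V : ℕ → Ω → ℤ) (hVmeas : ∀ i, Measurable (V i))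
    (hindep : iIndepFun V P)
    (hp1 : ∀ i, P {ω | V i ω = 1} = ENNReal.ofReal ((1 - r) / 2))
    (hm1 : ∀ i, P {ω | V i ω = -1} = ENNReal.ofReal ((1 - r) / 2))
    (h0 : ∀ i, P {ω | V i ω = 0} = ENNReal.ofReal r)
    (S : ℕ → Ω → ℤ) (hS : ∀ k ω, S k ω = ∑ i ∈ Finset.range k, V i ω)
    (a k : ℕ) (ha : 0 < a) (hk : 0 < k) :
    2 * P {ω | 0 < S k ω ∧ S k ω < (a : ℤ)} ≤ P {ω | ∀ i ∈ Finset.Icc 1 k, S i ω < (a : ℤ)} ∧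
      P {ω | ∀ i ∈ Finset.Icc 1 k, S i ω < (a : ℤ)} ≤
        2 * P {ω | 0 ≤ S k ω ∧ S k ω ≤ (a : ℤ)} :=
  stmt5_general P r V hVmeas hindep hp1 hm1 h0 S hS a k ha
end

section
/- Let ν be a probability measure on ℝ^d and a ∈ ℝ^d. Then ν − ½·(ν ∧ (δ_{−a} ∗ ν)) − ½·(ν ∧ (δ_a ∗ ν)) is a nonnegative measure, and ½·δ_{−a} ∗ (ν ∧ (δ_a ∗ ν)) + ½·δ_a ∗ (ν ∧ (δ_{−a} ∗ ν)) + (ν − ½·(ν ∧ (δ_{−a} ∗ ν)) − ½·(ν ∧ (δ_a ∗ ν))) = ν. (This says that in the Mineka coupling, if (U, ΔU) has the joint law P((U,ΔU) ∈ C × {a}) = ½(ν ∧ (δ_{−a}∗ν))(C), P((U,ΔU) ∈ C × {−a}) = ½(ν ∧ (δ_a∗ν))(C), P((U,ΔU) ∈ C × {0}) = (ν − ½(ν ∧ (δ_{−a}∗ν) + ν ∧ (δ_a∗ν)))(C), then U' := U + ΔU again has law ν.) -/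
open MeasureTheory
open scoped ENNReal

lemma smul_le_smul_hm {α : Type*} [MeasurableSpace α] (c : ℝ≥0∞) (μ ν : Measure α)
    (h : μ ≤ ν) : c • μ ≤ c • ν := by
  intro s
  simp only [Measure.smul_apply, smul_eq_mul]
  exact mul_le_mul_right (h s) c

lemma map_inf_aux {α : Type*} [MeasurableSpace α] (e : α ≃ᵐ α) (μ ν : Measure α) :
    Measure.map e (μ ⊓ ν) = Measure.map e μ ⊓ Measure.map e ν := by
  refine le_antisymm (le_inf (Measure.map_mono inf_le_left e.measurable)
    (Measure.map_mono inf_le_right e.measurable)) ?_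
  have h : Measure.map e.symm (Measure.map e μ ⊓ Measure.map e ν) ≤ μ ⊓ ν := by
    refine le_inf ?_ ?_
    · calc Measure.map e.symm (Measure.map e μ ⊓ Measure.map e ν)
          ≤ Measure.map e.symm (Measure.map e μ) :=
            Measure.map_mono inf_le_left e.symm.measurable
        _ = μ := by
            rw [Measure.map_map e.symm.measurable e.measurable]
            simp
    · calc Measure.map e.symm (Measure.map e μ ⊓ Measure.map e ν)
          ≤ Measure.map e.symm (Measure.map e ν) :=
            Measure.map_mono inf_le_right e.symm.measurable
        _ = ν := by
            rw [Measure.map_map e.symm.measurable e.measurable]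
            simp
  have := Measure.map_mono h e.measurable
  rwa [Measure.map_map e.measurable e.symm.measurable, show ⇑e ∘ ⇑e.symm = id from funext e.apply_symm_apply, Measure.map_id] at this

/-- For a probability measure `ν` on `ℝ^d` and `a ∈ ℝ^d`:
`ν - ½(ν ∧ (δ_{-a}∗ν)) - ½(ν ∧ (δ_a∗ν))` is a nonnegative measure (i.e. the subtracted sum
is `≤ ν`), and
`½ δ_{-a}∗(ν ∧ (δ_a∗ν)) + ½ δ_a∗(ν ∧ (δ_{-a}∗ν)) + (ν - ½(ν ∧ (δ_{-a}∗ν)) - ½(ν ∧ (δ_a∗ν))) = ν`.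
Here `δ_a ∗ ν` is the pushforward of `ν` under `z ↦ z + a`, `∧` is the lattice minimum of
measures, and `-` is measure subtraction. -/
theorem stmt9 {d : ℕ} (ν : Measure (EuclideanSpace ℝ (Fin d))) [IsProbabilityMeasure ν]
    (a : EuclideanSpace ℝ (Fin d)) :
    (1 / 2 : ℝ≥0∞) • (ν ⊓ Measure.map (fun z => z + (-a)) ν) +
        (1 / 2 : ℝ≥0∞) • (ν ⊓ Measure.map (fun z => z + a) ν) ≤ ν ∧
    (1 / 2 : ℝ≥0∞) • Measure.map (fun z => z + (-a)) (ν ⊓ Measure.map (fun z => z + a) ν) +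
        (1 / 2 : ℝ≥0∞) • Measure.map (fun z => z + a) (ν ⊓ Measure.map (fun z => z + (-a)) ν) +
        (ν - ((1 / 2 : ℝ≥0∞) • (ν ⊓ Measure.map (fun z => z + (-a)) ν) +
          (1 / 2 : ℝ≥0∞) • (ν ⊓ Measure.map (fun z => z + a) ν))) = ν := by
  set e : EuclideanSpace ℝ (Fin d) ≃ᵐ EuclideanSpace ℝ (Fin d) :=
    MeasurableEquiv.addRight a with he
  have hplus : (fun z : EuclideanSpace ℝ (Fin d) => z + a) = ⇑e := rfl
  have hminus : (fun z : EuclideanSpace ℝ (Fin d) => z + (-a)) = ⇑e.symm := by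
    funext z; simp [he, sub_eq_add_neg]
  have hle : (1 / 2 : ℝ≥0∞) • (ν ⊓ Measure.map (fun z => z + (-a)) ν) +
      (1 / 2 : ℝ≥0∞) • (ν ⊓ Measure.map (fun z => z + a) ν) ≤ ν := by
    calc (1 / 2 : ℝ≥0∞) • (ν ⊓ Measure.map (fun z => z + (-a)) ν) +
        (1 / 2 : ℝ≥0∞) • (ν ⊓ Measure.map (fun z => z + a) ν)
        ≤ (1 / 2 : ℝ≥0∞) • ν + (1 / 2 : ℝ≥0∞) • ν :=
          add_le_add (smul_le_smul_hm _ _ _ inf_le_left) (smul_le_smul_hm _ _ _ inf_le_left)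
      _ = ν := by
          rw [← add_smul]
          norm_num [ENNReal.inv_two_add_inv_two]
  refine ⟨hle, ?_⟩
  have h1 : Measure.map (fun z => z + (-a)) (ν ⊓ Measure.map (fun z => z + a) ν) =
      ν ⊓ Measure.map (fun z => z + (-a)) ν := by
    rw [hplus, hminus, map_inf_aux, Measure.map_map e.symm.measurable e.measurable,
      show ⇑e.symm ∘ ⇑e = id from funext e.symm_apply_apply, Measure.map_id, inf_comm]
  have h2 : Measure.map (fun z => z + a) (ν ⊓ Measure.map (fun z => z + (-a)) ν) =
      ν ⊓ Measure.map (fun z => z + a) ν := by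
    rw [hplus, hminus, map_inf_aux, Measure.map_map e.measurable e.symm.measurable,
      show ⇑e ∘ ⇑e.symm = id from funext e.apply_symm_apply, Measure.map_id, inf_comm]
  rw [h1, h2]
  haveI : IsFiniteMeasure ((1 / 2 : ℝ≥0∞) • (ν ⊓ Measure.map (fun z => z + (-a)) ν) +
      (1 / 2 : ℝ≥0∞) • (ν ⊓ Measure.map (fun z => z + a) ν)) :=
    isFiniteMeasure_of_le ν hle
  rw [add_comm, Measure.sub_add_cancel_of_le hle]
end

section
/- For every x > 0, Σ_{k=1}^∞ x^k/(√k · k!) ≤ √2 · (e^x − 1)/√x. Equivalently, for all C > 0 and t > 0, Σ_{k=1}^∞ (Ct)^k e^{−Ct}/(√k · k!) ≤ √2 · (1 − e^{−Ct})/√(Ct). -/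
lemma exp_tsum (x : ℝ) : Real.exp x = ∑' n : ℕ, x ^ n / n.factorial := by
  rw [Real.exp_eq_exp_ℝ, NormedSpace.exp_eq_tsum_div]

lemma sum1 (x : ℝ) : Summable (fun k : ℕ => x ^ (k+1) / ((k+1).factorial : ℝ)) :=
  (summable_nat_add_iff 1).2 (Real.summable_pow_div_factorial x)

lemma shift1 (x : ℝ) : ∑' k : ℕ, x ^ (k+1) / (k+1).factorial = Real.exp x - 1 := by
  have h := Summable.tsum_eq_zero_add (Real.summable_pow_div_factorial x)
  rw [← exp_tsum] at h
  simp at h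
  linarith

lemma shift2 (x : ℝ) : ∑' k : ℕ, x ^ (k+2) / (k+2).factorial = Real.exp x - 1 - x := by
  have h := Summable.tsum_eq_zero_add (sum1 x)
  rw [shift1 x] at h
  simp only [show ∀ n : ℕ, n + 1 + 1 = n + 2 from fun n => rfl, zero_add, pow_one,
    Nat.factorial_one, Nat.cast_one, div_one] at h
  linarith

-- termwise key inequality
lemma termwise (x : ℝ) (hx : 0 < x) (k : ℕ) :
    x ^ (k + 1) / (Real.sqrt ((k : ℝ) + 1) * ((k+1).factorial : ℝ)) ≤
      (Real.sqrt 2 / Real.sqrt x / 2) * (x ^ (k+1) / ((k+1).factorial : ℝ)) +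
      (Real.sqrt x / Real.sqrt 2) * (x ^ (k+1) / ((k+2).factorial : ℝ)) := by
  set K : ℝ := (k : ℝ) + 1 with hK
  have hK1 : (1 : ℝ) ≤ K := by
    have : (0:ℝ) ≤ (k:ℝ) := Nat.cast_nonneg k
    linarith
  set q := Real.sqrt K with hq
  set s := Real.sqrt x with hs
  set r := Real.sqrt 2 with hr
  have hq0 : 0 < q := Real.sqrt_pos.2 (by linarith)
  have hs0 : 0 < s := Real.sqrt_pos.2 hx
  have hr0 : 0 < r := Real.sqrt_pos.2 (by norm_num)
  have hq2 : q ^ 2 = K := Real.sq_sqrt (by linarith)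
  have hs2 : s ^ 2 = x := Real.sq_sqrt hx.le
  have hr2 : r ^ 2 = 2 := Real.sq_sqrt (by norm_num)
  have hfac : ((k+2).factorial : ℝ) = (K + 1) * ((k+1).factorial : ℝ) := by
    rw [Nat.factorial_succ]
    push_cast
    ring
  have hF0 : (0:ℝ) < ((k+1).factorial : ℝ) := by positivity
  have hP0 : (0:ℝ) < x ^ (k+1) := by positivity
  -- key scalar inequality: 1/q ≤ r/(2s) + s/(r(K+1))
  have hq1 : Real.sqrt (K + 1) * r ≤ 2 * q := by
    have h1 : Real.sqrt (K + 1) * r = Real.sqrt ((K+1) * 2) := by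
      rw [Real.sqrt_mul (by linarith)]
    have h2 : 2 * q = Real.sqrt (4 * K) := by
      rw [Real.sqrt_mul (by norm_num), show Real.sqrt 4 = 2 by
        rw [show (4:ℝ) = 2^2 by norm_num, Real.sqrt_sq (by norm_num)]]
    rw [h1, h2]
    apply Real.sqrt_le_sqrt
    linarith
  set q1 := Real.sqrt (K + 1) with hq1d
  have hq10 : 0 < q1 := Real.sqrt_pos.2 (by linarith)
  have hq12 : q1 ^ 2 = K + 1 := Real.sq_sqrt (by linarith)
  have am : 2 * q1 * s ≤ K + 1 + x := by nlinarith [sq_nonneg (q1 - s)]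
  have key2 : 2 * (K + 1) * (s * r) ≤ (r * r * (K + 1) + 2 * (s * s)) * q := by
    have e1 : 2 * (K + 1) * (s * r) = 2 * ((q1 * r) * (q1 * s)) := by
      rw [show (K:ℝ) + 1 = q1 ^ 2 from hq12.symm]; ring
    have e2 : (r * r * (K + 1) + 2 * (s * s)) * q = 2 * q * (K + 1 + x) := by
      rw [show r * r = r ^ 2 by ring, show s * s = s ^ 2 by ring, hr2, hs2]; ring
    rw [e1, e2]
    calc 2 * ((q1 * r) * (q1 * s)) ≤ 2 * ((2 * q) * (q1 * s)) := by
          apply mul_le_mul_of_nonneg_left _ (by norm_num)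
          exact mul_le_mul_of_nonneg_right hq1 (by positivity)
      _ = 2 * q * (2 * q1 * s) := by ring
      _ ≤ 2 * q * (K + 1 + x) := mul_le_mul_of_nonneg_left am (by positivity)
  have key : 1 / q ≤ r / s / 2 + s / r / (K + 1) := by
    have expand : r / s / 2 + s / r / (K + 1)
        = (r * r * (K + 1) + 2 * (s * s)) / (2 * (K + 1) * (s * r)) := by
      field_simp
    rw [expand, div_le_div_iff₀ hq0 (by positivity)]
    nlinarith [key2]
  -- assemble
  have lhs_eq : x ^ (k + 1) / (q * ((k+1).factorial : ℝ))
      = (1 / q) * (x ^ (k+1) / ((k+1).factorial : ℝ)) := by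
    field_simp
  have rhs2 : x ^ (k+1) / ((k+2).factorial : ℝ)
      = (1 / (K + 1)) * (x ^ (k+1) / ((k+1).factorial : ℝ)) := by
    rw [hfac]
    field_simp
  rw [lhs_eq, rhs2]
  have base_pos : 0 < x ^ (k+1) / ((k+1).factorial : ℝ) := by positivity
  have : (r / s / 2) * (x ^ (k+1) / ((k+1).factorial : ℝ)) +
      (s / r) * ((1 / (K + 1)) * (x ^ (k+1) / ((k+1).factorial : ℝ)))
      = (r / s / 2 + s / r / (K + 1)) * (x ^ (k+1) / ((k+1).factorial : ℝ)) := by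
    ring
  rw [this]
  exact mul_le_mul_of_nonneg_right key base_pos.le

lemma keylem (x : ℝ) (hx : 0 < x) :
    ∑' k : ℕ, x ^ (k + 1) / (Real.sqrt ((k : ℝ) + 1) * (Nat.factorial (k + 1) : ℝ)) ≤
      Real.sqrt 2 * (Real.exp x - 1) / Real.sqrt x := by
  set s := Real.sqrt x with hs
  set r := Real.sqrt 2 with hr
  have hs0 : 0 < s := Real.sqrt_pos.2 hx
  have hr0 : 0 < r := Real.sqrt_pos.2 (by norm_num)
  have hs2 : s ^ 2 = x := Real.sq_sqrt hx.le
  have hr2 : r ^ 2 = 2 := Real.sq_sqrt (by norm_num)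
  have Sg : Summable (fun k : ℕ => x ^ (k+1) / ((k+1).factorial : ℝ)) := sum1 x
  have Sh : Summable (fun k : ℕ => x ^ (k+1) / ((k+2).factorial : ℝ)) := by
    have : (fun k : ℕ => x ^ (k+1) / ((k+2).factorial : ℝ))
        = fun k : ℕ => (x ^ (k+2) / ((k+2).factorial : ℝ)) * x⁻¹ := by
      funext k; field_simp; ring
    rw [this]
    exact ((summable_nat_add_iff 2).2 (Real.summable_pow_div_factorial x)).mul_right _
  have Sbnd : Summable (fun k : ℕ => (r / s / 2) * (x ^ (k+1) / ((k+1).factorial : ℝ)) +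
      (s / r) * (x ^ (k+1) / ((k+2).factorial : ℝ))) :=
    (Sg.mul_left _).add (Sh.mul_left _)
  have Sf : Summable (fun k : ℕ =>
      x ^ (k + 1) / (Real.sqrt ((k : ℝ) + 1) * (Nat.factorial (k + 1) : ℝ))) := by
    apply Summable.of_nonneg_of_le (fun k => by positivity) (fun k => termwise x hx k) Sbnd
  calc ∑' k : ℕ, x ^ (k + 1) / (Real.sqrt ((k : ℝ) + 1) * (Nat.factorial (k + 1) : ℝ))
      ≤ ∑' k : ℕ, ((r / s / 2) * (x ^ (k+1) / ((k+1).factorial : ℝ)) +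
          (s / r) * (x ^ (k+1) / ((k+2).factorial : ℝ))) :=
        Summable.tsum_le_tsum (fun k => termwise x hx k) Sf Sbnd
    _ = (r / s / 2) * (Real.exp x - 1) + (s / r) * ((Real.exp x - 1 - x) / x) := by
        rw [Summable.tsum_add (Sg.mul_left _) (Sh.mul_left _), tsum_mul_left, tsum_mul_left, shift1]
        congr 1
        congr 1
        have : (fun k : ℕ => x ^ (k+1) / ((k+2).factorial : ℝ))
            = fun k : ℕ => (x ^ (k+2) / ((k+2).factorial : ℝ)) * x⁻¹ := by
          funext k; field_simp; ring
        rw [this, tsum_mul_right, shift2]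
        field_simp
    _ ≤ r * (Real.exp x - 1) / s := by
        have hE : 0 ≤ Real.exp x - 1 - x := by
          nlinarith [Real.add_one_le_exp x]
        have hE2 : x ≤ Real.exp x - 1 := by linarith
        have h1 : (s / r) * ((Real.exp x - 1 - x) / x) ≤ (s / r) * ((Real.exp x - 1) / x) := by
          apply mul_le_mul_of_nonneg_left _ (by positivity)
          exact (div_le_div_iff_of_pos_right hx).2 (by linarith)
        have h2 : (s / r) * ((Real.exp x - 1) / x) = r * (Real.exp x - 1) / s / 2 := by
          field_simp
          linear_combination (2 * (Real.exp x - 1)) * hs2 - (x * (Real.exp x - 1)) * hr2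
        have h3 : (r / s / 2) * (Real.exp x - 1) = r * (Real.exp x - 1) / s / 2 := by ring
        linarith

/-- For every `x > 0`, `Σ_{k≥1} x^k/(√k · k!) ≤ √2·(e^x - 1)/√x`;
equivalently, for all `C, t > 0`,
`Σ_{k≥1} (Ct)^k e^{-Ct}/(√k · k!) ≤ √2·(1 - e^{-Ct})/√(Ct)`. -/
theorem stmt13 :
    (∀ x : ℝ, 0 < x →
      ∑' k : ℕ, x ^ (k + 1) / (Real.sqrt ((k : ℝ) + 1) * (Nat.factorial (k + 1) : ℝ)) ≤
        Real.sqrt 2 * (Real.exp x - 1) / Real.sqrt x) ∧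
    (∀ C t : ℝ, 0 < C → 0 < t →
      ∑' k : ℕ, (C * t) ^ (k + 1) * Real.exp (-(C * t)) /
          (Real.sqrt ((k : ℝ) + 1) * (Nat.factorial (k + 1) : ℝ)) ≤
        Real.sqrt 2 * (1 - Real.exp (-(C * t))) / Real.sqrt (C * t)) := by
  constructor
  · exact keylem
  · intro C t hC ht
    set x := C * t with hx
    have hx0 : 0 < x := mul_pos hC ht
    have key := keylem x hx0
    have hE0 : 0 < Real.exp (-x) := Real.exp_pos _
    have heq : ∑' k : ℕ, x ^ (k + 1) * Real.exp (-x) /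
        (Real.sqrt ((k : ℝ) + 1) * (Nat.factorial (k + 1) : ℝ))
        = (∑' k : ℕ, x ^ (k + 1) /
            (Real.sqrt ((k : ℝ) + 1) * (Nat.factorial (k + 1) : ℝ))) * Real.exp (-x) := by
      rw [← tsum_mul_right]
      congr 1; funext k; ring
    rw [heq]
    have hrhs : Real.sqrt 2 * (1 - Real.exp (-x)) / Real.sqrt x
        = (Real.sqrt 2 * (Real.exp x - 1) / Real.sqrt x) * Real.exp (-x) := by
      rw [div_mul_eq_mul_div]
      congr 1
      have h1 : (Real.exp x - 1) * Real.exp (-x) = 1 - Real.exp (-x) := by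
        rw [sub_mul, ← Real.exp_add]
        simp
      rw [mul_assoc, h1]
    rw [hrhs]
    exact mul_le_mul_of_nonneg_right key hE0.le
end
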